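/- Let H be a normal sublocal group of G with normalizing neighborhood V, and W a symmetric open neighborhood of 1 with W ⊆ U₆ and W⁶ ⊆ V. Give W/E_H the quotient topology with canonical map π_{H,W} : W → W/E_H; define ι_{H,W}(E_H(x)) := E_H(x⁻¹), Ω_{H,W} := (π_{H,W}×π_{H,W})((W×W) ∩ p⁻¹(W)), and p_{H,W}(E_H(x),E_H(y)) := E_H(xy) for representatives x,y of the local cosets with xy ∈ W. Then ι_{H,W} and p_{H,W} are well defined, (G/H)_W := (W/E_H, E_H(1), ι_{H,W}, p_{H,W}) is a local group, and π_{H,W} : G|W → (G/H)_W is a morphism of local groups. -/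

import Mathlib

open scoped Topology Manifold ENNReal

/-- A local group in the sense of Goldbring's "Hilbert's Fifth Problem for Local Groups":
a Hausdorff-intended topological space `G` with a distinguished element `one`, a partial
inversion `inv` defined (i.e. meaningful) on the open set `Lambda`, and a partial product
`mul` meaningful on the open set `Omega`. -/
structure LocalGroup (G : Type*) [TopologicalSpace G] where
  one : G
  Lambda : Set G
  Omega : Set (G × G)
  inv : G → G
  mul : G → G → G
  isOpen_Lambda : IsOpen Lambda
  isOpen_Omega : IsOpen Omega
  one_mem_Lambda : one ∈ Lambda
  pair_one_left : ∀ x : G, (one, x) ∈ Omega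
  pair_one_right : ∀ x : G, (x, one) ∈ Omega
  continuousOn_inv : ContinuousOn inv Lambda
  continuousOn_mul : ContinuousOn (fun q : G × G => mul q.1 q.2) Omega
  one_mul : ∀ x : G, mul one x = x
  mul_one : ∀ x : G, mul x one = x
  mem_inv_right : ∀ x ∈ Lambda, (x, inv x) ∈ Omega
  mem_inv_left : ∀ x ∈ Lambda, (inv x, x) ∈ Omega
  mul_inv_self : ∀ x ∈ Lambda, mul x (inv x) = one
  inv_mul_self : ∀ x ∈ Lambda, mul (inv x) x = one
  assoc : ∀ x y z : G, (x, y) ∈ Omega → (y, z) ∈ Omega → (mul x y, z) ∈ Omega →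
    (x, mul y z) ∈ Omega → mul (mul x y) z = mul x (mul y z)

namespace LocalGroup

variable {G : Type*} {G' : Type*} [TopologicalSpace G] [TopologicalSpace G']

/-- The standing conventions of the paper: `Λ = G`, and whenever `(g,h) ∈ Ω` also
`(h⁻¹, g⁻¹) ∈ Ω` with `(gh)⁻¹ = h⁻¹g⁻¹`. -/
def Std (L : LocalGroup G) : Prop :=
  L.Lambda = Set.univ ∧
    ∀ g h : G, (g, h) ∈ L.Omega →
      (L.inv h, L.inv g) ∈ L.Omega ∧ L.inv (L.mul g h) = L.mul (L.inv h) (L.inv g)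

/-- A symmetric subset: contained in the domain of inversion and stable under it. -/
def IsSymmetric (L : LocalGroup G) (S : Set G) : Prop :=
  S ⊆ L.Lambda ∧ L.inv '' S = S

/-- A subgroup of a local group. -/
def IsSubgroup (L : LocalGroup G) (H : Set G) : Prop :=
  L.one ∈ H ∧ H ⊆ L.Lambda ∧ (∀ x ∈ H, ∀ y ∈ H, (x, y) ∈ L.Omega) ∧
    (∀ x ∈ H, L.inv x ∈ H) ∧ ∀ x ∈ H, ∀ y ∈ H, L.mul x y ∈ H

/-- No small subgroups. -/
def NSS (L : LocalGroup G) : Prop :=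
  ∃ U ∈ 𝓝 L.one, ∀ H : Set G, L.IsSubgroup H → H ⊆ U → H = {L.one}

/-- No small connected subgroups. -/
def NSCS (L : LocalGroup G) : Prop :=
  ∃ U ∈ 𝓝 L.one, ∀ H : Set G, L.IsSubgroup H → IsConnected H → H ⊆ U → H = {L.one}

/-- `(a₁, …, aₙ)` represents `b`: all ways of multiplying the list are defined and equal `b`.
By convention the empty list represents `one`. -/
def Represents (L : LocalGroup G) : List G → G → Prop
  | [], b => b = L.one
  | [a], b => b = a
  | a :: c :: l, b =>
      ∀ i : ℕ, 1 ≤ i → i < (a :: c :: l).length →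
        ∃ b₁ b₂ : G, L.Represents ((a :: c :: l).take i) b₁ ∧
          L.Represents ((a :: c :: l).drop i) b₂ ∧ (b₁, b₂) ∈ L.Omega ∧ L.mul b₁ b₂ = b
termination_by l => l.length
decreasing_by
  all_goals simp only [List.length_cons, List.length_take, List.length_drop] at *
  all_goals omega

/-- `A^n`: all products of `n` elements of `A` (only meaningful when such products are defined). -/
def setPow (L : LocalGroup G) (A : Set G) (n : ℕ) : Set G :=
  {b | ∃ l : List G, l.length = n ∧ (∀ a ∈ l, a ∈ A) ∧ L.Represents l b}

/-- A chain `U₁ ⊇ U₂ ⊇ ⋯` of symmetric open neighborhoods of `1` such that products of `n`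
elements of `Uₙ` are defined (the sets `𝒰ₙ` of the paper). -/
def IsProdChain (L : LocalGroup G) (U : ℕ → Set G) : Prop :=
  ∀ n : ℕ, 1 ≤ n →
    IsOpen (U n) ∧ L.one ∈ U n ∧ L.IsSymmetric (U n) ∧ U (n + 1) ⊆ U n ∧
      ∀ l : List G, l.length = n → (∀ a ∈ l, a ∈ U n) → ∃ b, L.Represents l b

/-- `a^k` is defined and equal to `b`, for `k : ℤ` (with `a^(-n) := (a⁻¹)^n`). -/
def zpowRep (L : LocalGroup G) (a : G) : ℤ → G → Prop
  | Int.ofNat n, b => L.Represents (List.replicate n a) b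
  | Int.negSucc n, b => L.Represents (List.replicate (n + 1) (L.inv a)) b

/-- A special neighborhood (relative to a product chain `U`): a compact symmetric
neighborhood of `1` contained in `U 2`, containing no nontrivial subgroup, on which
squaring is injective. -/
def IsSpecialNbhd (L : LocalGroup G) (U : ℕ → Set G) (SU : Set G) : Prop :=
  IsCompact SU ∧ SU ∈ 𝓝 L.one ∧ L.IsSymmetric SU ∧ SU ⊆ U 2 ∧
    (∀ H : Set G, L.IsSubgroup H → H ⊆ SU → H = {L.one}) ∧
    ∀ x ∈ SU, ∀ y ∈ SU, L.mul x x = L.mul y y → x = y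

/-- `Λ_U` for the restriction `G|U`. -/
def restLambda (L : LocalGroup G) (U : Set G) : Set G := L.Lambda ∩ U ∩ L.inv ⁻¹' U

/-- `Ω_U` for the restriction `G|U`. -/
def restOmega (L : LocalGroup G) (U : Set G) : Set (G × G) :=
  {q | q ∈ L.Omega ∧ q.1 ∈ U ∧ q.2 ∈ U ∧ L.mul q.1 q.2 ∈ U}

/-- A morphism of local groups `L → L'`. -/
def IsMorphism (L : LocalGroup G) (L' : LocalGroup G') (f : G → G') : Prop :=
  Continuous f ∧ f L.one = L'.one ∧
    (∀ x ∈ L.Lambda, f x ∈ L'.Lambda ∧ f (L.inv x) = L'.inv (f x)) ∧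
    ∀ x y : G, (x, y) ∈ L.Omega → ((f x, f y) ∈ L'.Omega ∧ f (L.mul x y) = L'.mul (f x) (f y))

/-- `f` is a morphism of local groups `G|U → G'|U'` between restrictions. -/
def IsRestMorphism (L : LocalGroup G) (L' : LocalGroup G') (U : Set G) (U' : Set G')
    (f : G → G') : Prop :=
  ContinuousOn f U ∧ Set.MapsTo f U U' ∧ f L.one = L'.one ∧
    (∀ x ∈ L.restLambda U, f x ∈ L'.restLambda U' ∧ f (L.inv x) = L'.inv (f x)) ∧
    ∀ x y : G, (x, y) ∈ L.restOmega U →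
      ((f x, f y) ∈ L'.restOmega U' ∧ f (L.mul x y) = L'.mul (f x) (f y))

/-- Local isomorphism: a homeomorphism between open neighborhoods of the identities which
is a morphism of restrictions in both directions. -/
def LocallyIsomorphic (L : LocalGroup G) (L' : LocalGroup G') : Prop :=
  ∃ (U : Set G) (U' : Set G') (f : G → G') (g : G' → G),
    IsOpen U ∧ L.one ∈ U ∧ IsOpen U' ∧ L'.one ∈ U' ∧
      Set.BijOn f U U' ∧ (∀ x ∈ U, g (f x) = x) ∧ (∀ y ∈ U', f (g y) = y) ∧
      L.IsRestMorphism L' U U' f ∧ L'.IsRestMorphism L U' U g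

/-- A topological group regarded as a local group with `Λ = G` and `Ω = G × G`. -/
def ofGroup (H : Type*) [TopologicalSpace H] [Group H] [IsTopologicalGroup H] : LocalGroup H where
  one := 1
  Lambda := Set.univ
  Omega := Set.univ
  inv := fun x => x⁻¹
  mul := fun x y => x * y
  isOpen_Lambda := isOpen_univ
  isOpen_Omega := isOpen_univ
  one_mem_Lambda := trivial
  pair_one_left := fun _ => trivial
  pair_one_right := fun _ => trivial
  continuousOn_inv := continuous_inv.continuousOn
  continuousOn_mul := (continuous_fst.mul continuous_snd).continuousOn
  one_mul := fun x => _root_.one_mul x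
  mul_one := fun x => _root_.mul_one x
  mem_inv_right := fun _ _ => trivial
  mem_inv_left := fun _ _ => trivial
  mul_inv_self := fun x _ => mul_inv_cancel x
  inv_mul_self := fun x _ => inv_mul_cancel x
  assoc := fun x y z _ _ _ _ => mul_assoc x y z

/-- A bundled (finite-dimensional, real) Lie group in the Mathlib sense. -/
structure BundledLieGroup : Type 1 where
  n : ℕ
  carrier : Type
  [ts : TopologicalSpace carrier]
  [t2 : T2Space carrier]
  [grp : Group carrier]
  [tg : IsTopologicalGroup carrier]
  [cs : ChartedSpace (EuclideanSpace ℝ (Fin n)) carrier]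
  [lie : LieGroup (𝓡 n) (⊤ : ℕ∞) carrier]

/-- `L` is locally isomorphic to (the local group underlying) a Lie group. -/
def IsLieLocallyIsomorphic (L : LocalGroup G) : Prop :=
  ∃ B : BundledLieGroup,
    letI := B.ts; letI := B.grp; letI := B.tg
    L.LocallyIsomorphic (ofGroup B.carrier)

/-- A local one-parameter subgroup of `L`, with domain `(-r, r)` (where `r ∈ (0,∞]`). -/
structure LocalOnePS (L : LocalGroup G) where
  r : ℝ≥0∞
  r_pos : 0 < r
  toFun : ℝ → G
  mem_Lambda : ∀ t : ℝ, ENNReal.ofReal |t| < r → toFun t ∈ L.Lambda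
  continuousOn : ContinuousOn toFun {t : ℝ | ENNReal.ofReal |t| < r}
  add : ∀ s t : ℝ, ENNReal.ofReal |s| < r → ENNReal.ofReal |t| < r →
    ENNReal.ofReal |s + t| < r →
      (toFun s, toFun t) ∈ L.Omega ∧ toFun (s + t) = L.mul (toFun s) (toFun t)

variable {L : LocalGroup G}

/-- Equivalence (equality of germs at 0) of local one-parameter subgroups. -/
def OnePSEquiv (X Y : LocalOnePS L) : Prop :=
  ∃ s : ℝ, 0 < s ∧ ENNReal.ofReal s < X.r ∧ ENNReal.ofReal s < Y.r ∧
    ∀ t : ℝ, |t| < s → X.toFun t = Y.toFun t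

theorem onePS_exists_small (X : LocalOnePS L) : ∃ s : ℝ, 0 < s ∧ ENNReal.ofReal s < X.r := by
  rcases eq_or_ne X.r ⊤ with h | h
  · exact ⟨1, one_pos, by simp [h]⟩
  · have h0 : X.r ≠ 0 := ne_of_gt X.r_pos
    have htr : 0 < X.r.toReal := ENNReal.toReal_pos h0 h
    refine ⟨X.r.toReal / 2, by linarith, ?_⟩
    rw [ENNReal.ofReal_lt_iff_lt_toReal (by linarith) h]
    linarith

instance onePSSetoid (L : LocalGroup G) : Setoid (LocalOnePS L) where
  r := OnePSEquiv
  iseqv := by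
    constructor
    · intro X
      obtain ⟨s, hs, hsr⟩ := onePS_exists_small X
      exact ⟨s, hs, hsr, hsr, fun _ _ => rfl⟩
    · rintro X Y ⟨s, hs, h1, h2, h3⟩
      exact ⟨s, hs, h2, h1, fun t ht => (h3 t ht).symm⟩
    · rintro X Y Z ⟨s1, hs1, hX1, hY1, hag1⟩ ⟨s2, hs2, hY2, hZ2, hag2⟩
      refine ⟨min s1 s2, lt_min hs1 hs2, ?_, ?_, fun t ht => ?_⟩
      · exact lt_of_le_of_lt (ENNReal.ofReal_le_ofReal (min_le_left _ _)) hX1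
      · exact lt_of_le_of_lt (ENNReal.ofReal_le_ofReal (min_le_right _ _)) hZ2
      · rw [hag1 t (lt_of_lt_of_le ht (min_le_left _ _)),
          hag2 t (lt_of_lt_of_le ht (min_le_right _ _))]

/-- `L(G)`: the set of germs at `0` of local one-parameter subgroups of `L`. -/
abbrev LGQuot (L : LocalGroup G) := Quotient (onePSSetoid L)

/-- The trivial local one-parameter subgroup `O`. -/
noncomputable def constOnePS (L : LocalGroup G) : LocalOnePS L where
  r := ⊤
  r_pos := by simp
  toFun := fun _ => L.one
  mem_Lambda := fun _ _ => L.one_mem_Lambda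
  continuousOn := continuousOn_const
  add := fun s t _ _ _ => ⟨L.pair_one_left L.one, (L.one_mul L.one).symm⟩

/-- The domain of a germ of local one-parameter subgroups: the union of the domains of its
representatives. -/
def germDomain (L : LocalGroup G) (X : LGQuot L) : Set ℝ :=
  {t | ∃ Y : LocalOnePS L, ⟦Y⟧ = X ∧ ENNReal.ofReal |t| < Y.r}

/-- Evaluation of a germ at a point of its domain (junk value outside). This is
well defined, i.e. independent of the choice of representative, by the basic theory
of local one-parameter subgroups. -/
noncomputable def germEval (L : LocalGroup G) (X : LGQuot L) (t : ℝ) : G := by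
  classical exact if h : ∃ Y : LocalOnePS L, ⟦Y⟧ = X ∧ ENNReal.ofReal |t| < Y.r then h.choose.toFun t
  else L.one

/-- The topology on `L(G)` generated by the subbasic sets `B_{C,U}` for `C ⊆ (-2,2)`
compact and `U ⊆ G` open. -/
instance germTopology (L : LocalGroup G) : TopologicalSpace (LGQuot L) :=
  TopologicalSpace.generateFrom
    {S | ∃ (C : Set ℝ) (U : Set G), IsCompact C ∧ C ⊆ Set.Ioo (-2 : ℝ) 2 ∧ IsOpen U ∧
      S = {X : LGQuot L | C ⊆ germDomain L X ∧ ∀ t ∈ C, germEval L X t ∈ U}}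

/-- A sublocal group `H` of `L`, with associated neighborhood `V`. -/
def IsSublocalGroup (L : LocalGroup G) (H V : Set G) : Prop :=
  L.one ∈ H ∧ IsOpen V ∧ L.one ∈ V ∧ H ⊆ V ∧ (∀ x ∈ closure H, x ∈ V → x ∈ H) ∧
    (∀ x ∈ H, x ∈ L.Lambda → L.inv x ∈ V → L.inv x ∈ H) ∧
    ∀ x ∈ H, ∀ y ∈ H, (x, y) ∈ L.Omega → L.mul x y ∈ V → L.mul x y ∈ H

/-- A normal sublocal group `H` of `L`, with normalizing neighborhood `V`. -/
def IsNormalSublocalGroup (L : LocalGroup G) (H V : Set G) : Prop :=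
  L.IsSublocalGroup H V ∧ L.IsSymmetric V ∧
    ∀ y ∈ V, ∀ x ∈ H, ∀ b : G, L.Represents [y, x, L.inv y] b → b ∈ V → b ∈ H

/-- The coset relation `E_H` on `W`. -/
def quotRel (L : LocalGroup G) (H W : Set G) : ↥W → ↥W → Prop :=
  fun x y => L.mul (L.inv ↑x) ↑y ∈ H

/-- The local coset space `W/E_H`, with the quotient topology. -/
abbrev QuotCarrier (L : LocalGroup G) (H W : Set G) := Quot (L.quotRel H W)

/-- `Q` is the local quotient group structure `(G/H)_W` on `W/E_H`. -/
def IsQuotStructure (L : LocalGroup G) (H W : Set G) (h1W : L.one ∈ W)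
    (Q : LocalGroup (L.QuotCarrier H W)) : Prop :=
  Q.one = Quot.mk (L.quotRel H W) ⟨L.one, h1W⟩ ∧
    Q.Lambda = Set.univ ∧
    (∀ (x : ↥W) (hx : L.inv ↑x ∈ W),
      Q.inv (Quot.mk (L.quotRel H W) x) = Quot.mk (L.quotRel H W) ⟨L.inv ↑x, hx⟩) ∧
    Q.Omega = {q | ∃ x y : ↥W, ((x : G), (y : G)) ∈ L.Omega ∧ L.mul ↑x ↑y ∈ W ∧
      q = (Quot.mk (L.quotRel H W) x, Quot.mk (L.quotRel H W) y)} ∧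
    ∀ (x y : ↥W) (_ : ((x : G), (y : G)) ∈ L.Omega) (hm : L.mul ↑x ↑y ∈ W),
      Q.mul (Quot.mk (L.quotRel H W) x) (Quot.mk (L.quotRel H W) y) =
        Quot.mk (L.quotRel H W) ⟨L.mul ↑x ↑y, hm⟩

/-- The sup-norm of a real-valued function. -/
noncomputable def supNorm (f : G → ℝ) : ℝ := ⨆ x : G, |f x|

/-- `W²` = the set of products of two elements of `W`. -/
def sqSet (L : LocalGroup G) (W : Set G) : Set G :=
  {z | ∃ a ∈ W, ∃ b ∈ W, (a, b) ∈ L.Omega ∧ L.mul a b = z}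

/-- The (left-translation) action `a · f` of `a` on functions supported in `W`:
`(a·f)(x) = f (a⁻¹ x)` for `x ∈ W²` and `0` otherwise. -/
noncomputable def act (L : LocalGroup G) (W : Set G) (a : G) (f : G → ℝ) : G → ℝ := by
  classical exact fun x => if x ∈ L.sqSet W then f (L.mul (L.inv a) x) else 0

/-- `ord(x) ≥ n` relative to the special neighborhood `SU`: all powers `x^k`, `|k| ≤ n`,
are defined and lie in `SU`. -/
def ordGE (L : LocalGroup G) (SU : Set G) (n : ℕ) : Set G :=
  {x | ∀ k : ℤ, k.natAbs ≤ n → ∃ b : G, L.zpowRep x k b ∧ b ∈ SU}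

end LocalGroup

open LocalGroup

/-!
Every word of at most six letters from `W` has a well-defined product, which lies in `V`.
Inside such words one may cancel `a a⁻¹` and regroup letters, and `H` absorbs products and
conjugation by letters, since both stay in `V`. Each axiom of `(G/H)_W` thus becomes a word
computation in which representatives are exchanged one letter at a time: well-definedness of
the product is `(xy)⁻¹(x'y') = y⁻¹(x⁻¹x')y · y⁻¹y'`, and associativity moves from
`y⁻¹x⁻¹x'y' ∈ H` to `(uz')⁻¹(x'v) ∈ H` without ever exceeding six letters.
The projection `W → W/E_H` is open: near a point `a ~ o` of the saturation of an open `O ∋ o`,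
the open set `{b | b (a⁻¹o) ∈ O}` lies in that saturation. So `π × π` is open, which gives
openness of `Ω_{H,W}` and continuity of `p_{H,W}`.
-/

theorem IsOpenMap.continuousOn_image_of_comp {X Y Z : Type*} [TopologicalSpace X]
    [TopologicalSpace Y] [TopologicalSpace Z] {f : X → Y} (hf : IsOpenMap f) {g : Y → Z}
    {s : Set X} (hs : IsOpen s) (hg : ContinuousOn (g ∘ f) s) : ContinuousOn g (f '' s) := by
  rintro _ ⟨x, hx, rfl⟩
  refine ContinuousAt.continuousWithinAt fun t ht => Filter.mem_map.mpr ?_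
  exact Filter.mem_of_superset (hf.image_mem_nhds (hg.continuousAt (hs.mem_nhds hx) ht))
    (Set.image_subset_iff.mpr subset_rfl)

namespace LocalGroup

variable {G : Type*} [TopologicalSpace G] {L : LocalGroup G}

theorem represents_nil_iff {b : G} : L.Represents [] b ↔ b = L.one := by
  rw [Represents]

theorem represents_singleton (a : G) : L.Represents [a] a := by
  rw [Represents]

theorem represents_singleton_iff {a b : G} : L.Represents [a] b ↔ b = a := by
  rw [Represents]

theorem Represents.exists_split {l : List G} {b : G} (h : L.Represents l b) {i : ℕ}
    (hi : 1 ≤ i) (hil : i < l.length) :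
    ∃ b₁ b₂ : G, L.Represents (l.take i) b₁ ∧ L.Represents (l.drop i) b₂ ∧
      (b₁, b₂) ∈ L.Omega ∧ L.mul b₁ b₂ = b := by
  match l, h, hil with
  | [_], _, hil => simp at hil; omega
  | _ :: _ :: _, h, hil => rw [Represents] at h; exact h i hi hil

theorem represents_of_forall_split {l : List G} (hl : 2 ≤ l.length) {b : G}
    (h : ∀ i : ℕ, 1 ≤ i → i < l.length →
      ∃ b₁ b₂ : G, L.Represents (l.take i) b₁ ∧ L.Represents (l.drop i) b₂ ∧
        (b₁, b₂) ∈ L.Omega ∧ L.mul b₁ b₂ = b) : L.Represents l b := by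
  match l, hl with
  | _ :: _ :: _, _ => rw [Represents]; exact h

theorem Represents.unique {l : List G} {b b' : G} (h : L.Represents l b)
    (h' : L.Represents l b') : b = b' := by
  induction l generalizing b b' with
  | nil => rw [represents_nil_iff.mp h, represents_nil_iff.mp h']
  | cons a t ih =>
    rcases eq_or_ne t [] with rfl | ht
    · rw [represents_singleton_iff.mp h, represents_singleton_iff.mp h']
    have hlen : 1 < (a :: t).length := by simpa using List.length_pos_iff.mpr ht
    obtain ⟨b₁, b₂, hb₁, hb₂, -, rfl⟩ := h.exists_split le_rfl hlen
    obtain ⟨b₁', b₂', hb₁', hb₂', -, rfl⟩ := h'.exists_split le_rfl hlen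
    simp only [List.take_succ_cons, List.take_zero, List.drop_succ_cons, List.drop_zero,
      represents_singleton_iff] at hb₁ hb₁' hb₂ hb₂'
    rw [hb₁, hb₁', ih hb₂ hb₂']

theorem Represents.append {l₁ l₂ : List G} {b b₁ b₂ : G} (h : L.Represents (l₁ ++ l₂) b)
    (h₁ : L.Represents l₁ b₁) (h₂ : L.Represents l₂ b₂) :
    (b₁, b₂) ∈ L.Omega ∧ L.mul b₁ b₂ = b := by
  rcases eq_or_ne l₁ [] with rfl | hne₁
  · rw [represents_nil_iff.mp h₁, L.one_mul, h.unique h₂]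
    exact ⟨L.pair_one_left b₂, rfl⟩
  rcases eq_or_ne l₂ [] with rfl | hne₂
  · rw [List.append_nil] at h
    rw [represents_nil_iff.mp h₂, L.mul_one, h.unique h₁]
    exact ⟨L.pair_one_right b₁, rfl⟩
  have hlen₁ := List.length_pos_iff.mpr hne₁
  have hlen₂ := List.length_pos_iff.mpr hne₂
  obtain ⟨c₁, c₂, hc₁, hc₂, hc⟩ := h.exists_split hlen₁ (by simp; omega)
  rw [List.take_left] at hc₁
  rw [List.drop_left] at hc₂
  rwa [h₁.unique hc₁, h₂.unique hc₂]

theorem represents_pair {a b : G} (h : (a, b) ∈ L.Omega) : L.Represents [a, b] (L.mul a b) := by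
  refine represents_of_forall_split le_rfl fun i hi hi' => ?_
  obtain rfl : i = 1 := by simp at hi'; omega
  exact ⟨a, b, represents_singleton a, represents_singleton b, h, rfl⟩

theorem represents_triple {a b c d : G} (hab : (a, b) ∈ L.Omega) (hbc : (b, c) ∈ L.Omega)
    (hab_c : (L.mul a b, c) ∈ L.Omega) (ha_bc : (a, L.mul b c) ∈ L.Omega)
    (hab_c_eq : L.mul (L.mul a b) c = d) (ha_bc_eq : L.mul a (L.mul b c) = d) :
    L.Represents [a, b, c] d := by
  refine represents_of_forall_split (by simp) fun i hi hi' => ?_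
  simp only [List.length_cons, List.length_nil] at hi'
  interval_cases i
  · exact ⟨a, L.mul b c, represents_singleton a, represents_pair hbc, ha_bc, ha_bc_eq⟩
  · exact ⟨L.mul a b, c, represents_pair hab, represents_singleton c, hab_c, hab_c_eq⟩

theorem Represents.append_one {l : List G} {b : G} (h : L.Represents l b) :
    L.Represents (l ++ [L.one]) b := by
  rcases eq_or_ne l [] with rfl | hne
  · rw [represents_nil_iff.mp h]; exact represents_singleton L.one
  have hlen := List.length_pos_iff.mpr hne
  refine represents_of_forall_split (by simp; omega) fun i hi hi' => ?_
  simp only [List.length_append, List.length_cons, List.length_nil] at hi'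
  rcases (by omega : i = l.length ∨ i < l.length) with rfl | hlt
  · rw [List.take_left, List.drop_left]
    exact ⟨b, L.one, h, represents_singleton L.one, L.pair_one_right b, L.mul_one b⟩
  · obtain ⟨b₁, b₂, hb₁, hb₂, hb⟩ := h.exists_split hi hlt
    rw [List.take_append_of_le_length hlt.le, List.drop_append_of_le_length hlt.le]
    exact ⟨b₁, b₂, hb₁, hb₂.append_one, hb⟩
termination_by l.length
decreasing_by simp; omega

/-- The product `a₁⋯aₙ` of a word; it is `L.one` (a junk value) when the word represents
nothing. -/
noncomputable def prod (L : LocalGroup G) (l : List G) : G := by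
  classical exact if h : ∃ b, L.Represents l b then h.choose else L.one

theorem Represents.prod_eq {l : List G} {b : G} (h : L.Represents l b) : L.prod l = b := by
  have hex : ∃ b, L.Represents l b := ⟨b, h⟩
  rw [prod, dif_pos hex]
  exact hex.choose_spec.unique h

theorem prod_singleton (a : G) : L.prod [a] = a :=
  (represents_singleton a).prod_eq

theorem prod_pair {a b : G} (h : (a, b) ∈ L.Omega) : L.prod [a, b] = L.mul a b :=
  (represents_pair h).prod_eq

theorem Std.mem_Lambda (hL : L.Std) (x : G) : x ∈ L.Lambda := by
  rw [hL.1]; trivial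

theorem Std.inv_inv (hL : L.Std) (x : G) : L.inv (L.inv x) = x := by
  have h := L.assoc x (L.inv x) (L.inv (L.inv x)) (L.mem_inv_right x (hL.mem_Lambda x))
    (L.mem_inv_right _ (hL.mem_Lambda _))
    (by rw [L.mul_inv_self x (hL.mem_Lambda x)]; exact L.pair_one_left _)
    (by rw [L.mul_inv_self _ (hL.mem_Lambda _)]; exact L.pair_one_right _)
  rwa [L.mul_inv_self x (hL.mem_Lambda x), L.mul_inv_self _ (hL.mem_Lambda _), L.one_mul,
    L.mul_one] at h

theorem inv_mul_cancel_left {b k : G} (hb : b ∈ L.Lambda) (hbk : (b, k) ∈ L.Omega)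
    (hb_bk : (L.inv b, L.mul b k) ∈ L.Omega) : L.mul (L.inv b) (L.mul b k) = k := by
  have h := L.assoc (L.inv b) b k (L.mem_inv_left b hb) hbk
    (by rw [L.inv_mul_self b hb]; exact L.pair_one_left k) hb_bk
  rw [← h, L.inv_mul_self b hb, L.one_mul]

theorem IsProdChain.subset_of_le {Un : ℕ → Set G} (hUn : L.IsProdChain Un) {k n : ℕ}
    (hk : 1 ≤ k) (hkn : k ≤ n) : Un n ⊆ Un k := by
  induction n, hkn using Nat.le_induction with
  | base => exact subset_rfl
  | succ n hkn ih => exact ((hUn n (hk.trans hkn)).2.2.2.1).trans ih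

theorem IsProdChain.exists_represents {Un : ℕ → Set G} (hUn : L.IsProdChain Un) {n : ℕ}
    {W : Set G} (hW : W ⊆ Un n) {l : List G} (hlen : l.length ≤ n) (hl : ∀ a ∈ l, a ∈ W) :
    ∃ b, L.Represents l b := by
  rcases eq_or_ne l [] with rfl | hne
  · exact ⟨L.one, represents_nil_iff.mpr rfl⟩
  have hlen₁ := List.length_pos_iff.mpr hne
  exact (hUn l.length hlen₁).2.2.2.2 l rfl fun a ha =>
    hUn.subset_of_le hlen₁ hlen (hW (hl a ha))

/-- The conditions `W ⊆ U₆` and `W⁶ ⊆ V` on a symmetric neighbourhood `W` of `1`, in the form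
in which they are used: words of length at most six in `W` have a product, lying in `V`. -/
structure IsQuotNbhd (L : LocalGroup G) (V W : Set G) : Prop where
  std : L.Std
  one_mem : L.one ∈ W
  isSymmetric : L.IsSymmetric W
  exists_represents : ∀ l : List G, l.length ≤ 6 → (∀ a ∈ l, a ∈ W) → ∃ b, L.Represents l b
  setPow_subset : L.setPow W 6 ⊆ V

namespace IsQuotNbhd

variable {V W : Set G}

theorem inv_mem (hW : L.IsQuotNbhd V W) {a : G} (ha : a ∈ W) : L.inv a ∈ W := by
  rw [← hW.isSymmetric.2]; exact Set.mem_image_of_mem L.inv ha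

theorem represents_prod (hW : L.IsQuotNbhd V W) {l : List G} (hl : ∀ a ∈ l, a ∈ W)
    (hlen : l.length ≤ 6) : L.Represents l (L.prod l) := by
  obtain ⟨b, hb⟩ := hW.exists_represents l hlen hl
  rwa [hb.prod_eq]

theorem prod_mem_V (hW : L.IsQuotNbhd V W) {l : List G} (hl : ∀ a ∈ l, a ∈ W)
    (hlen : l.length ≤ 6) : L.prod l ∈ V := by
  induction hk : 6 - l.length generalizing l with
  | zero => exact hW.setPow_subset ⟨l, by omega, hl, hW.represents_prod hl hlen⟩
  | succ k ih =>
    have hl' : ∀ a ∈ l ++ [L.one], a ∈ W := by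
      simpa [or_imp, forall_and] using ⟨hl, hW.one_mem⟩
    rw [← ((hW.represents_prod hl hlen).append_one).prod_eq]
    exact ih hl' (by simp; omega) (by simp; omega)

theorem mem_V (hW : L.IsQuotNbhd V W) {a : G} (ha : a ∈ W) : a ∈ V := by
  simpa [prod_singleton] using hW.prod_mem_V (l := [a]) (by simpa using ha) (by simp)

theorem mem_Omega (hW : L.IsQuotNbhd V W) {a b : G} (ha : a ∈ W) (hb : b ∈ W) :
    (a, b) ∈ L.Omega := by
  obtain ⟨c, hc⟩ := hW.exists_represents [a, b] (by simp) (by simp [ha, hb])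
  exact (hc.append (l₁ := [a]) (represents_singleton a) (represents_singleton b)).1

theorem prod_pair (hW : L.IsQuotNbhd V W) {a b : G} (ha : a ∈ W) (hb : b ∈ W) :
    L.prod [a, b] = L.mul a b :=
  LocalGroup.prod_pair (hW.mem_Omega ha hb)

theorem inv_mul_eq_prod (hW : L.IsQuotNbhd V W) {a b : G} (ha : a ∈ W) (hb : b ∈ W) :
    L.inv (L.mul a b) = L.prod [L.inv b, L.inv a] := by
  rw [(hW.std.2 a b (hW.mem_Omega ha hb)).2, hW.prod_pair (hW.inv_mem hb) (hW.inv_mem ha)]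

theorem mem_Omega_prod_prod (hW : L.IsQuotNbhd V W) {l₁ l₂ : List G}
    (hl : ∀ a ∈ l₁ ++ l₂, a ∈ W) (hlen : (l₁ ++ l₂).length ≤ 6) :
    (L.prod l₁, L.prod l₂) ∈ L.Omega := by
  have h := hW.represents_prod hl hlen
  simp only [List.mem_append, or_imp, forall_and, List.length_append] at hl hlen
  exact (h.append (hW.represents_prod hl.1 (by omega)) (hW.represents_prod hl.2 (by omega))).1

theorem prod_append (hW : L.IsQuotNbhd V W) {l₁ l₂ : List G}
    (hl : ∀ a ∈ l₁ ++ l₂, a ∈ W) (hlen : (l₁ ++ l₂).length ≤ 6) :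
    L.prod (l₁ ++ l₂) = L.mul (L.prod l₁) (L.prod l₂) := by
  have h := hW.represents_prod hl hlen
  simp only [List.mem_append, or_imp, forall_and, List.length_append] at hl hlen
  exact (h.append (hW.represents_prod hl.1 (by omega))
    (hW.represents_prod hl.2 (by omega))).2.symm

theorem prod_cons (hW : L.IsQuotNbhd V W) {a : G} {l : List G} (ha : a ∈ W)
    (hl : ∀ x ∈ l, x ∈ W) (hlen : l.length ≤ 5) :
    L.prod (a :: l) = L.mul a (L.prod l) := by
  have h := hW.prod_append (l₁ := [a]) (l₂ := l) (by simpa using ⟨ha, hl⟩) (by simp; omega)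
  rwa [prod_singleton] at h

theorem prod_regroup (hW : L.IsQuotNbhd V W) {l₁ m l₂ : List G} (hm : m ≠ [])
    (hl : ∀ a ∈ l₁ ++ m ++ l₂, a ∈ W) (hlen : (l₁ ++ m ++ l₂).length ≤ 6)
    (hmW : L.prod m ∈ W) : L.prod (l₁ ++ m ++ l₂) = L.prod (l₁ ++ L.prod m :: l₂) := by
  have hm₁ := List.length_pos_iff.mpr hm
  simp only [List.mem_append, or_imp, forall_and, List.length_append] at hl hlen
  rw [List.append_assoc, hW.prod_append (by simp_all [or_imp]) (by simp; omega),
    hW.prod_append (by simp_all [or_imp]) (by simp; omega),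
    hW.prod_append (by simp_all [or_imp]) (by simp; omega), hW.prod_cons hmW hl.2 (by omega)]

theorem prod_cancel (hW : L.IsQuotNbhd V W) {a b : G} {l₁ l₂ : List G} (ha : a ∈ W)
    (hb : b ∈ W) (hab : L.mul a b = L.one) (hl : ∀ x ∈ l₁ ++ l₂, x ∈ W)
    (hlen : (l₁ ++ l₂).length ≤ 4) : L.prod (l₁ ++ a :: b :: l₂) = L.prod (l₁ ++ l₂) := by
  have h₁ := hW.one_mem
  simp only [List.mem_append, or_imp, forall_and, List.length_append] at hl hlen
  have hreg := hW.prod_regroup (l₁ := l₁) (m := [a, b]) (l₂ := l₂) (by simp)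
    (by simp_all [or_imp]) (by simp; omega) (by rwa [hW.prod_pair ha hb, hab])
  rw [hW.prod_pair ha hb, hab] at hreg
  rw [show l₁ ++ a :: b :: l₂ = l₁ ++ [a, b] ++ l₂ by simp, hreg,
    hW.prod_append (by simp_all [or_imp]) (by simp; omega), hW.prod_cons h₁ hl.2 (by omega),
    L.one_mul, hW.prod_append (by simp_all [or_imp]) (by simp; omega)]

variable {H : Set G}

theorem prod_append_mem (hW : L.IsQuotNbhd V W) (hH : L.IsNormalSublocalGroup H V)
    {l₁ l₂ : List G} (hl : ∀ a ∈ l₁ ++ l₂, a ∈ W) (hlen : (l₁ ++ l₂).length ≤ 6)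
    (h₁ : L.prod l₁ ∈ H) (h₂ : L.prod l₂ ∈ H) : L.prod (l₁ ++ l₂) ∈ H := by
  have hV := hW.prod_mem_V hl hlen
  rw [hW.prod_append hl hlen] at hV ⊢
  exact hH.1.2.2.2.2.2.2 _ h₁ _ h₂ (hW.mem_Omega_prod_prod hl hlen) hV

theorem prod_conj_mem (hW : L.IsQuotNbhd V W) (hH : L.IsNormalSublocalGroup H V) {y : G}
    {l : List G} (hy : y ∈ W) (hl : ∀ a ∈ l, a ∈ W) (hlen : l.length ≤ 4) (h : L.prod l ∈ H) :
    L.prod (y :: l ++ [L.inv y]) ∈ H := by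
  have hy' := hW.inv_mem hy
  have hyl : ∀ a ∈ y :: l, a ∈ W := by simpa using ⟨hy, hl⟩
  have hly : ∀ a ∈ l ++ [L.inv y], a ∈ W := by simpa [or_imp, forall_and] using ⟨hl, hy'⟩
  have hyly : ∀ a ∈ y :: l ++ [L.inv y], a ∈ W := by
    simpa [or_imp, forall_and] using ⟨hy, hl, hy'⟩
  have hyl_eq := hW.prod_cons hy hl (by omega)
  have hly_eq := hW.prod_append hly (by simp; omega)
  rw [prod_singleton] at hly_eq
  have hrep : L.Represents [y, L.prod l, L.inv y] (L.prod (y :: l ++ [L.inv y])) := by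
    refine represents_triple ?_ ?_ ?_ ?_ ?_ ?_
    · simpa [prod_singleton] using hW.mem_Omega_prod_prod (l₁ := [y]) hyl (by simp; omega)
    · simpa [prod_singleton] using hW.mem_Omega_prod_prod hly (by simp; omega)
    · simpa [prod_singleton, hyl_eq] using
        hW.mem_Omega_prod_prod (l₁ := y :: l) hyly (by simp; omega)
    · simpa [prod_singleton, hly_eq] using
        hW.mem_Omega_prod_prod (l₁ := [y]) hyly (by simp; omega)
    · rw [← hyl_eq, hW.prod_append hyly (by simp; omega), prod_singleton]
    · rw [← hly_eq, ← hW.prod_cons hy hly (by simp; omega), List.cons_append]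
  exact hH.2.2 y (hW.mem_V hy) _ h _ hrep (hW.prod_mem_V hyly (by simp; omega))

theorem prod_replace_last_mem (hW : L.IsQuotNbhd V W) (hH : L.IsNormalSublocalGroup H V)
    {l : List G} {c c' : G} (hl : ∀ a ∈ l, a ∈ W) (hlen : l.length ≤ 3) (hc : c ∈ W)
    (hc' : c' ∈ W) (h : L.prod (l ++ [c]) ∈ H) (hcc' : L.mul (L.inv c) c' ∈ H) :
    L.prod (l ++ [c']) ∈ H := by
  have hc₁ := hW.inv_mem hc
  rw [← hW.prod_cancel hc hc₁ (L.mul_inv_self c (hW.std.mem_Lambda c))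
      (by simpa [or_imp, forall_and] using ⟨hl, hc'⟩) (by simp; omega),
    show l ++ c :: L.inv c :: [c'] = (l ++ [c]) ++ [L.inv c, c'] by simp]
  exact hW.prod_append_mem hH (by simpa [or_imp, forall_and] using ⟨hl, hc, hc₁, hc'⟩)
    (by simp; omega) h (by rwa [hW.prod_pair hc₁ hc'])

theorem prod_replace_head_mem (hW : L.IsQuotNbhd V W) (hH : L.IsNormalSublocalGroup H V)
    {l : List G} {c c' : G} (hl : ∀ a ∈ l, a ∈ W) (hlen : l.length ≤ 3) (hc : c ∈ W)
    (hc' : c' ∈ W) (h : L.prod (c :: l) ∈ H) (hcc' : L.mul c' (L.inv c) ∈ H) :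
    L.prod (c' :: l) ∈ H := by
  have hc₁ := hW.inv_mem hc
  rw [← List.singleton_append,
    ← hW.prod_cancel hc₁ hc (L.inv_mul_self c (hW.std.mem_Lambda c))
      (by simpa [or_imp, forall_and] using ⟨hc', hl⟩) (by simp; omega),
    show [c'] ++ L.inv c :: c :: l = [c', L.inv c] ++ c :: l by simp]
  exact hW.prod_append_mem hH (by simpa [or_imp, forall_and] using ⟨hc', hc₁, hc, hl⟩)
    (by simp; omega) (by rwa [hW.prod_pair hc' hc₁]) h

theorem prod_inv_mul_cons (hW : L.IsQuotNbhd V W) {a b : G} {l : List G} (ha : a ∈ W)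
    (hb : b ∈ W) (hab : L.mul a b ∈ W) (hl : ∀ x ∈ l, x ∈ W) (hlen : l.length ≤ 4) :
    L.prod (L.inv (L.mul a b) :: l) = L.prod (L.inv b :: L.inv a :: l) := by
  have hreg := hW.prod_regroup (l₁ := []) (m := [L.inv b, L.inv a]) (l₂ := l) (by simp)
    (by simpa [or_imp, forall_and] using ⟨hW.inv_mem hb, hW.inv_mem ha, hl⟩) (by simp; omega)
    (by rw [← hW.inv_mul_eq_prod ha hb]; exact hW.inv_mem hab)
  rw [← hW.inv_mul_eq_prod ha hb] at hreg
  exact hreg.symm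

theorem prod_append_mul (hW : L.IsQuotNbhd V W) {a b : G} {l : List G} (ha : a ∈ W)
    (hb : b ∈ W) (hab : L.mul a b ∈ W) (hl : ∀ x ∈ l, x ∈ W) (hlen : l.length ≤ 4) :
    L.prod (l ++ [L.mul a b]) = L.prod (l ++ [a, b]) := by
  have hreg := hW.prod_regroup (l₁ := l) (m := [a, b]) (l₂ := []) (by simp)
    (by simpa [or_imp, forall_and] using ⟨hl, ha, hb⟩) (by simp; omega)
    (by rwa [hW.prod_pair ha hb])
  rw [hW.prod_pair ha hb, List.append_nil] at hreg
  exact hreg.symm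

theorem quotRel_refl (hW : L.IsQuotNbhd V W) (hH : L.IsSublocalGroup H V) (x : W) :
    L.quotRel H W x x := by
  show L.mul _ _ ∈ H
  rw [L.inv_mul_self _ (hW.std.mem_Lambda _)]
  exact hH.1

theorem quotRel_symm (hW : L.IsQuotNbhd V W) (hH : L.IsSublocalGroup H V) {x y : W}
    (h : L.quotRel H W x y) : L.quotRel H W y x := by
  have hinv : L.inv (L.mul (L.inv x) y) = L.mul (L.inv y) x := by
    rw [(hW.std.2 _ _ (hW.mem_Omega (hW.inv_mem x.2) y.2)).2, hW.std.inv_inv]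
  have hV : L.mul (L.inv y) x ∈ V := by
    rw [← hW.prod_pair (hW.inv_mem y.2) x.2]
    exact hW.prod_mem_V (by simp [hW.inv_mem y.2]) (by simp)
  show _ ∈ H
  rw [← hinv] at hV ⊢
  exact hH.2.2.2.2.2.1 _ h (hW.std.mem_Lambda _) hV

theorem quotRel_trans (hW : L.IsQuotNbhd V W) (hH : L.IsNormalSublocalGroup H V) {x y z : W}
    (hxy : L.quotRel H W x y) (hyz : L.quotRel H W y z) : L.quotRel H W x z := by
  have hx := hW.inv_mem x.2
  have hy := hW.inv_mem y.2
  show _ ∈ H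
  rw [← hW.prod_pair hx z.2, ← List.singleton_append,
    ← hW.prod_cancel y.2 hy (L.mul_inv_self _ (hW.std.mem_Lambda _)) (by simp [hx])
      (by simp)]
  exact hW.prod_append_mem hH (l₁ := [_, _]) (l₂ := [_, _]) (by simp [hx, hy]) (by simp)
    (by rwa [hW.prod_pair hx y.2]) (by rwa [hW.prod_pair hy z.2])

theorem quotRel_equivalence (hW : L.IsQuotNbhd V W) (hH : L.IsNormalSublocalGroup H V) :
    Equivalence (L.quotRel H W) :=
  ⟨hW.quotRel_refl hH.1, hW.quotRel_symm hH.1, hW.quotRel_trans hH⟩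

theorem mk_eq_mk_iff (hW : L.IsQuotNbhd V W) (hH : L.IsNormalSublocalGroup H V) {x y : W} :
    Quot.mk (L.quotRel H W) x = Quot.mk _ y ↔ L.quotRel H W x y :=
  ⟨fun h => (hW.quotRel_equivalence hH).eqvGen_iff.mp (Quot.eqvGen_exact h), Quot.sound⟩

theorem quotRel_inv (hW : L.IsQuotNbhd V W) (hH : L.IsNormalSublocalGroup H V) {x y : W}
    (h : L.quotRel H W x y) :
    L.quotRel H W ⟨L.inv x, hW.inv_mem x.2⟩ ⟨L.inv y, hW.inv_mem y.2⟩ := by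
  have hx := hW.inv_mem x.2
  have hy := hW.inv_mem y.2
  have hconj := hW.prod_conj_mem hH (l := [L.inv y, x]) x.2 (by simp [hy]) (by simp)
    (by rw [hW.prod_pair hy x.2]; exact hW.quotRel_symm hH.1 h)
  show L.mul _ _ ∈ H
  rwa [hW.std.inv_inv, ← hW.prod_pair x.2 hy, ← List.append_nil [_, _],
    ← hW.prod_cancel x.2 hx (L.mul_inv_self _ (hW.std.mem_Lambda _)) (by simp [hy]) (by simp)]

theorem prod_inv_pair_mul_pair_mem (hW : L.IsQuotNbhd V W) (hH : L.IsNormalSublocalGroup H V)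
    {x x' y y' : G} (hx : x ∈ W) (hx' : x' ∈ W) (hy : y ∈ W) (hy' : y' ∈ W)
    (hxx' : L.mul (L.inv x) x' ∈ H) (hyy' : L.mul (L.inv y) y' ∈ H) :
    L.prod [L.inv y, L.inv x, x', y'] ∈ H := by
  have hconj := hW.prod_conj_mem hH (l := [L.inv x, x']) (hW.inv_mem hy)
    (by simp [hW.inv_mem hx, hx']) (by simp) (by rwa [hW.prod_pair (hW.inv_mem hx) hx'])
  rw [hW.std.inv_inv] at hconj
  exact hW.prod_replace_last_mem hH (l := [_, _, _])
    (by simp [hW.inv_mem hx, hW.inv_mem hy, hx']) (by simp) hy hy' hconj hyy'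

theorem quotRel_mul (hW : L.IsQuotNbhd V W) (hH : L.IsNormalSublocalGroup H V)
    {x x' y y' : G} (hx : x ∈ W) (hx' : x' ∈ W) (hy : y ∈ W) (hy' : y' ∈ W)
    (hxy : L.mul x y ∈ W) (hxy' : L.mul x' y' ∈ W)
    (hxx' : L.mul (L.inv x) x' ∈ H) (hyy' : L.mul (L.inv y) y' ∈ H) :
    L.mul (L.inv (L.mul x y)) (L.mul x' y') ∈ H := by
  have hword := hW.prod_inv_pair_mul_pair_mem hH hx hx' hy hy' hxx' hyy'
  rw [← hW.prod_inv_mul_cons hx hy hxy (by simp [hx', hy']) (by simp)] at hword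
  rw [← hW.prod_pair (hW.inv_mem hxy) hxy']
  show L.prod ([_] ++ [_]) ∈ H
  rwa [hW.prod_append_mul hx' hy' hxy' (by simp [hW.inv_mem hxy]) (by simp)]

theorem quotRel_assoc (hW : L.IsQuotNbhd V W) (hH : L.IsNormalSublocalGroup H V)
    {x x' y y' z z' u v : G} (hx : x ∈ W) (hx' : x' ∈ W) (hy : y ∈ W) (hy' : y' ∈ W)
    (hz : z ∈ W) (hz' : z' ∈ W) (hu : u ∈ W) (hv : v ∈ W) (hxy : L.mul x y ∈ W)
    (hyz : L.mul y' z ∈ W) (huz : L.mul u z' ∈ W) (hxv : L.mul x' v ∈ W)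
    (hxx' : L.mul (L.inv x) x' ∈ H) (hyy' : L.mul (L.inv y) y' ∈ H)
    (hzz : L.mul (L.inv z') z ∈ H) (hu_xy : L.mul (L.inv u) (L.mul x y) ∈ H)
    (hyz_v : L.mul (L.inv (L.mul y' z)) v ∈ H) :
    L.mul (L.inv (L.mul u z')) (L.mul x' v) ∈ H := by
  have hu₁ := hW.inv_mem hu
  have hz₁ := hW.inv_mem hz'
  have huz₁ := hW.inv_mem huz
  have h₁ := hW.prod_inv_pair_mul_pair_mem hH hx hx' hy hy' hxx' hyy'
  rw [← hW.prod_inv_mul_cons hx hy hxy (by simp [hx', hy']) (by simp)] at h₁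
  have h₂ : L.prod [L.inv u, x', y'] ∈ H :=
    hW.prod_replace_head_mem hH (by simp [hx', hy']) (by simp) (hW.inv_mem hxy) hu₁ h₁
      (by rwa [hW.std.inv_inv])
  have h₃ : L.prod [L.inv z', L.inv u, x', y', z'] ∈ H := by
    have h := hW.prod_conj_mem hH (l := [L.inv u, x', y']) hz₁ (by simp [hu₁, hx', hy'])
      (by simp) h₂
    rwa [hW.std.inv_inv] at h
  rw [← hW.prod_inv_mul_cons hu hz' huz (by simp [hx', hy', hz']) (by simp)] at h₃
  have h₄ : L.prod [L.inv (L.mul u z'), x', y', z] ∈ H :=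
    hW.prod_replace_last_mem hH (l := [_, _, _]) (by simp [huz₁, hx', hy']) (by simp) hz' hz
      h₃ hzz
  have h₅ : L.prod ([L.inv (L.mul u z'), x'] ++ [L.mul y' z]) ∈ H := by
    rwa [hW.prod_append_mul hy' hz hyz (by simp [huz₁, hx']) (by simp)]
  have h₆ : L.prod ([L.inv (L.mul u z')] ++ [x', v]) ∈ H :=
    hW.prod_replace_last_mem hH (l := [_, _]) (by simp [huz₁, hx']) (by simp) hyz hv h₅ hyz_v
  rwa [← hW.prod_append_mul hx' hv hxv (by simp [huz₁]) (by simp), List.singleton_append,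
    hW.prod_pair huz₁ hxv] at h₆

theorem mul_inv_cancel_left (hW : L.IsQuotNbhd V W) {a b : G} (ha : a ∈ W) (hb : b ∈ W) :
    (a, L.mul (L.inv a) b) ∈ L.Omega ∧ L.mul a (L.mul (L.inv a) b) = b := by
  have ha₁ := hW.inv_mem ha
  have hl : ∀ x ∈ [a, L.inv a, b], x ∈ W := by simp [ha, ha₁, hb]
  have hΩ := hW.mem_Omega_prod_prod (l₁ := [a]) (l₂ := [L.inv a, b]) hl (by simp)
  rw [prod_singleton, hW.prod_pair ha₁ hb] at hΩ
  refine ⟨hΩ, ?_⟩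
  rw [← hW.prod_pair ha₁ hb, ← hW.prod_cons ha (by simp [ha₁, hb]) (by simp),
    ← List.nil_append (a :: _), hW.prod_cancel ha ha₁ (L.mul_inv_self a (hW.std.mem_Lambda a))
      (by simp [hb]) (by simp), List.nil_append, prod_singleton]

theorem isOpenMap_quot_mk (hW : L.IsQuotNbhd V W) (hH : L.IsNormalSublocalGroup H V)
    (hWo : IsOpen W) : IsOpenMap (Quot.mk (L.quotRel H W)) := by
  intro O hO
  obtain ⟨U, hU, rfl⟩ := isOpen_induced_iff.mp hO
  rw [isOpen_coinduced, isOpen_iff_forall_mem_open]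
  rintro a ⟨o, ho, hoa⟩
  set k := L.mul (L.inv a) o
  have hk : k ∈ H := hW.quotRel_symm hH.1 ((hW.mk_eq_mk_iff hH).mp hoa)
  refine ⟨{b : W | ((b : G), k) ∈ L.Omega ∧ L.mul b k ∈ W ∩ U}, ?_, ?_, ?_⟩
  · rintro b ⟨hbk, hbkW, hbkU⟩
    refine ⟨⟨L.mul b k, hbkW⟩, hbkU, (Quot.sound ?_).symm⟩
    show L.mul _ _ ∈ H
    rwa [inv_mul_cancel_left (hW.std.mem_Lambda b) hbk (hW.mem_Omega (hW.inv_mem b.2) hbkW)]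
  · exact ((L.continuousOn_mul.isOpen_inter_preimage L.isOpen_Omega (hWo.inter hU)).preimage
      (continuous_id.prodMk continuous_const)).preimage continuous_subtype_val
  · obtain ⟨hak, hako⟩ := hW.mul_inv_cancel_left a.2 o.2
    exact ⟨hak, by rw [hako]; exact ⟨o.2, ho⟩⟩

end IsQuotNbhd

/-- Its image in `W/E_H × W/E_H` is `Ω_{H,W}`. -/
def mulDom (L : LocalGroup G) (W : Set G) : Set (W × W) :=
  {p | ((p.1 : G), (p.2 : G)) ∈ L.Omega ∧ L.mul p.1 p.2 ∈ W}

theorem isOpen_mulDom {W : Set G} (hWo : IsOpen W) : IsOpen (L.mulDom W) :=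
  (L.continuousOn_mul.isOpen_inter_preimage L.isOpen_Omega hWo).preimage (by fun_prop)

/-- `p_{H,W}`; off `Ω_{H,W}` it takes the junk value `q`. -/
noncomputable def quotMul (L : LocalGroup G) (H W : Set G) (p q : L.QuotCarrier H W) :
    L.QuotCarrier H W :=
  Function.extend (fun d : L.mulDom W => (Quot.mk _ d.1.1, Quot.mk _ d.1.2))
    (fun d => Quot.mk _ ⟨L.mul d.1.1 d.1.2, d.2.2⟩) Prod.snd (p, q)

namespace IsQuotNbhd

variable {V W H : Set G}

theorem quotMul_mk (hW : L.IsQuotNbhd V W) (hH : L.IsNormalSublocalGroup H V) {x y : W}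
    (hxy : (x, y) ∈ L.mulDom W) :
    L.quotMul H W (Quot.mk _ x) (Quot.mk _ y) = Quot.mk _ ⟨L.mul x y, hxy.2⟩ := by
  refine Function.FactorsThrough.extend_apply (fun d d' hdd' => ?_) Prod.snd
    (⟨(x, y), hxy⟩ : L.mulDom W)
  obtain ⟨hx, hy⟩ := Prod.mk.inj hdd'
  exact Quot.sound (hW.quotRel_mul hH d.1.1.2 d'.1.1.2 d.1.2.2 d'.1.2.2 d.2.2 d'.2.2
    ((hW.mk_eq_mk_iff hH).mp hx) ((hW.mk_eq_mk_iff hH).mp hy))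

theorem continuousOn_quotMul (hW : L.IsQuotNbhd V W) (hH : L.IsNormalSublocalGroup H V)
    (hWo : IsOpen W) :
    ContinuousOn (fun q : L.QuotCarrier H W × L.QuotCarrier H W => L.quotMul H W q.1 q.2)
      (Prod.map (Quot.mk _) (Quot.mk _) '' L.mulDom W) := by
  have hπ := hW.isOpenMap_quot_mk hH hWo
  refine (hπ.prodMap hπ).continuousOn_image_of_comp (isOpen_mulDom hWo)
    (continuousOn_iff_continuous_domRestrict.mpr ?_)
  have hmul : Continuous fun d : L.mulDom W => L.mul d.1.1 d.1.2 :=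
    L.continuousOn_mul.comp_continuous (f := fun d : L.mulDom W => ((d.1.1 : G), (d.1.2 : G)))
      (by fun_prop) fun d => d.2.1
  convert continuous_quot_mk.comp (hmul.subtype_mk fun d => d.2.2) using 1
  funext d
  exact hW.quotMul_mk hH d.2

theorem quotMul_assoc (hW : L.IsQuotNbhd V W) (hH : L.IsNormalSublocalGroup H V)
    {x y y' z u z' x' v : W} (hxy : (x, y) ∈ L.mulDom W) (hyz : (y', z) ∈ L.mulDom W)
    (huz : (u, z') ∈ L.mulDom W) (hxv : (x', v) ∈ L.mulDom W)
    (hy : Quot.mk (L.quotRel H W) y' = Quot.mk _ y)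
    (hu : Quot.mk (L.quotRel H W) u = Quot.mk _ ⟨L.mul x y, hxy.2⟩)
    (hz : Quot.mk (L.quotRel H W) z' = Quot.mk _ z) (hx : Quot.mk (L.quotRel H W) x' = Quot.mk _ x)
    (hv : Quot.mk (L.quotRel H W) v = Quot.mk _ ⟨L.mul y' z, hyz.2⟩) :
    L.quotMul H W (L.quotMul H W (Quot.mk _ x) (Quot.mk _ y)) (Quot.mk _ z) =
      L.quotMul H W (Quot.mk _ x) (L.quotMul H W (Quot.mk _ y) (Quot.mk _ z)) := by
  rw [hW.quotMul_mk hH hxy, ← hy, hW.quotMul_mk hH hyz, ← hu, ← hz, ← hx, ← hv,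
    hW.quotMul_mk hH huz, hW.quotMul_mk hH hxv]
  have rel := fun {a b : W} (h : Quot.mk (L.quotRel H W) a = Quot.mk _ b) =>
    (hW.mk_eq_mk_iff hH).mp h
  exact Quot.sound (hW.quotRel_assoc hH x.2 x'.2 y.2 y'.2 z.2 z'.2 u.2 v.2 hxy.2 hyz.2 huz.2
    hxv.2 (rel hx.symm) (rel hy.symm) (rel hz) (rel hu) (rel hv.symm))

theorem one_left_mem_mulDom (hW : L.IsQuotNbhd V W) (x : W) :
    (⟨L.one, hW.one_mem⟩, x) ∈ L.mulDom W :=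
  ⟨L.pair_one_left x, by rw [L.one_mul]; exact x.2⟩

theorem one_right_mem_mulDom (hW : L.IsQuotNbhd V W) (x : W) :
    (x, ⟨L.one, hW.one_mem⟩) ∈ L.mulDom W :=
  ⟨L.pair_one_right x, by rw [L.mul_one]; exact x.2⟩

theorem inv_right_mem_mulDom (hW : L.IsQuotNbhd V W) (x : W) :
    (x, ⟨L.inv x, hW.inv_mem x.2⟩) ∈ L.mulDom W :=
  ⟨hW.mem_Omega x.2 (hW.inv_mem x.2), by
    rw [L.mul_inv_self _ (hW.std.mem_Lambda _)]; exact hW.one_mem⟩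

theorem inv_left_mem_mulDom (hW : L.IsQuotNbhd V W) (x : W) :
    (⟨L.inv x, hW.inv_mem x.2⟩, x) ∈ L.mulDom W :=
  ⟨hW.mem_Omega (hW.inv_mem x.2) x.2, by
    rw [L.inv_mul_self _ (hW.std.mem_Lambda _)]; exact hW.one_mem⟩

def quotInv (hW : L.IsQuotNbhd V W) (hH : L.IsNormalSublocalGroup H V) :
    L.QuotCarrier H W → L.QuotCarrier H W :=
  Quot.lift (fun x => Quot.mk _ ⟨L.inv x, hW.inv_mem x.2⟩) fun _ _ h =>
    Quot.sound (hW.quotRel_inv hH h)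

noncomputable def quotLocalGroup (hW : L.IsQuotNbhd V W) (hH : L.IsNormalSublocalGroup H V)
    (hWo : IsOpen W) : LocalGroup (L.QuotCarrier H W) where
  one := Quot.mk _ ⟨L.one, hW.one_mem⟩
  Lambda := Set.univ
  Omega := Prod.map (Quot.mk _) (Quot.mk _) '' L.mulDom W
  inv := hW.quotInv hH
  mul := L.quotMul H W
  isOpen_Lambda := isOpen_univ
  isOpen_Omega := (hW.isOpenMap_quot_mk hH hWo).prodMap (hW.isOpenMap_quot_mk hH hWo) _
    (isOpen_mulDom hWo)
  one_mem_Lambda := trivial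
  pair_one_left := by rintro ⟨x⟩; exact ⟨_, hW.one_left_mem_mulDom x, rfl⟩
  pair_one_right := by rintro ⟨x⟩; exact ⟨_, hW.one_right_mem_mulDom x, rfl⟩
  continuousOn_inv := by
    have hinv : Continuous L.inv := continuousOn_univ.mp (hW.std.1 ▸ L.continuousOn_inv)
    exact (continuous_quot_lift _ (continuous_quot_mk.comp
      ((hinv.comp continuous_subtype_val).subtype_mk _))).continuousOn
  continuousOn_mul := hW.continuousOn_quotMul hH hWo
  one_mul := by
    rintro ⟨x⟩
    exact (hW.quotMul_mk hH (hW.one_left_mem_mulDom x)).trans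
      (congrArg _ (Subtype.ext (L.one_mul x)))
  mul_one := by
    rintro ⟨x⟩
    exact (hW.quotMul_mk hH (hW.one_right_mem_mulDom x)).trans
      (congrArg _ (Subtype.ext (L.mul_one x)))
  mem_inv_right := by rintro ⟨x⟩ -; exact ⟨_, hW.inv_right_mem_mulDom x, rfl⟩
  mem_inv_left := by rintro ⟨x⟩ -; exact ⟨_, hW.inv_left_mem_mulDom x, rfl⟩
  mul_inv_self := by
    rintro ⟨x⟩ -
    exact (hW.quotMul_mk hH (hW.inv_right_mem_mulDom x)).trans
      (congrArg _ (Subtype.ext (L.mul_inv_self x (hW.std.mem_Lambda x))))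
  inv_mul_self := by
    rintro ⟨x⟩ -
    exact (hW.quotMul_mk hH (hW.inv_left_mem_mulDom x)).trans
      (congrArg _ (Subtype.ext (L.inv_mul_self x (hW.std.mem_Lambda x))))
  assoc := by
    rintro _ _ _ ⟨⟨x, y⟩, hxy, h₁₂⟩ ⟨⟨y', z⟩, hyz, h₂₃⟩ h₁₂₃ h₁₂₃'
    obtain ⟨rfl, rfl⟩ := Prod.mk.inj h₁₂
    obtain ⟨hy, rfl⟩ := Prod.mk.inj h₂₃
    rw [hW.quotMul_mk hH hxy] at h₁₂₃
    rw [← hy, hW.quotMul_mk hH hyz] at h₁₂₃'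
    obtain ⟨⟨u, z'⟩, huz, h₁₂₃⟩ := h₁₂₃
    obtain ⟨⟨x', v⟩, hxv, h₁₂₃'⟩ := h₁₂₃'
    obtain ⟨hu, hz⟩ := Prod.mk.inj h₁₂₃
    obtain ⟨hx, hv⟩ := Prod.mk.inj h₁₂₃'
    exact hW.quotMul_assoc hH hxy hyz huz hxv hy hu hz hx hv

end IsQuotNbhd

end LocalGroup

theorem statement_14_general {G : Type*} [TopologicalSpace G]
    (L : LocalGroup G) (hstd : L.Std) (Un : ℕ → Set G) (hUn : L.IsProdChain Un)
    (H V : Set G) (hHV : L.IsNormalSublocalGroup H V)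
    (W : Set G) (hWo : IsOpen W) (h1W : L.one ∈ W) (hWsym : L.IsSymmetric W)
    (hW6 : W ⊆ Un 6) (hWpow : L.setPow W 6 ⊆ V) :
    ∃ Q : LocalGroup (L.QuotCarrier H W), L.IsQuotStructure H W h1W Q ∧
      Continuous (Quot.mk (L.quotRel H W)) ∧
      (∀ x : ↥W, L.inv ↑x ∈ W → Quot.mk (L.quotRel H W) x ∈ Q.Lambda) ∧
      ∀ x y : ↥W, ((x : G), (y : G)) ∈ L.Omega → L.mul ↑x ↑y ∈ W →
        (Quot.mk (L.quotRel H W) x, Quot.mk (L.quotRel H W) y) ∈ Q.Omega := by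
  have hW : L.IsQuotNbhd V W :=
    ⟨hstd, h1W, hWsym, fun _ hlen hl => hUn.exists_represents hW6 hlen hl, hWpow⟩
  refine ⟨hW.quotLocalGroup hHV hWo, ⟨rfl, rfl, fun _ _ => rfl, ?_,
    fun x y hO hm => hW.quotMul_mk hHV ⟨hO, hm⟩⟩, continuous_quot_mk, fun _ _ => trivial,
    fun x y hO hm => ⟨(x, y), ⟨hO, hm⟩, rfl⟩⟩
  ext q
  constructor
  · rintro ⟨⟨x, y⟩, ⟨hO, hm⟩, rfl⟩
    exact ⟨x, y, hO, hm, rfl⟩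
  · rintro ⟨x, y, hO, hm, rfl⟩
    exact ⟨(x, y), ⟨hO, hm⟩, rfl⟩

/-- the local coset space `(G/H)_W` carries a local group structure making
the canonical projection a morphism. -/
theorem statement_14 {G : Type*} [TopologicalSpace G] [T2Space G]
    (L : LocalGroup G) (hstd : L.Std) (Un : ℕ → Set G) (hUn : L.IsProdChain Un)
    (H V : Set G) (hHV : L.IsNormalSublocalGroup H V)
    (W : Set G) (hWo : IsOpen W) (h1W : L.one ∈ W) (hWsym : L.IsSymmetric W)
    (hW6 : W ⊆ Un 6) (hWpow : L.setPow W 6 ⊆ V) :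
    ∃ Q : LocalGroup (L.QuotCarrier H W), L.IsQuotStructure H W h1W Q ∧
      Continuous (Quot.mk (L.quotRel H W)) ∧
      (∀ x : ↥W, L.inv ↑x ∈ W → Quot.mk (L.quotRel H W) x ∈ Q.Lambda) ∧
      ∀ x y : ↥W, ((x : G), (y : G)) ∈ L.Omega → L.mul ↑x ↑y ∈ W →
        (Quot.mk (L.quotRel H W) x, Quot.mk (L.quotRel H W) y) ∈ Q.Omega :=
  statement_14_general L hstd Un hUn H V hHV W hWo h1W hWsym hW6 hWpow
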